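/- Let Z be a finite nonempty set and ζ : Z × Z → ℝ a nonnegative function with equal marginals, i.e., Σ_{z'} ζ(z,z') = Σ_{z'} ζ(z',z) for every z ∈ Z. Then ζ can be written as a finite nonnegative combination of cycle measures: there exist finitely many directed cycles C_1,…,C_J in Z and coefficients λ_1,…,λ_J ≥ 0 such that ζ(z,z') = Σ_{j : (z,z') ∈ C_j} λ_j for all (z,z') ∈ Z × Z. -/

import Mathlib

/-!
Follow positive edges of `ζ`: by equal marginals, every point with positive inflow has positive
outflow, so on a finite set such a walk closes up into a directed cycle all of whose edges
carry positive mass. Subtracting the cycle measure scaled by the least of these masses keeps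
`ζ` nonnegative with equal marginals and removes at least one edge from its support, so
induction on the size of the support decomposes `ζ`.
-/

open Finset

/-- `C ⊆ Z × Z` is a directed cycle: there are `m ≥ 1` distinct points
`z_1, …, z_m` with `C = {(z_1,z_2), …, (z_{m−1},z_m), (z_m,z_1)}`. -/
def IsCycle {Z : Type*} (C : Set (Z × Z)) : Prop :=
  ∃ m : ℕ, ∃ z : Fin (m + 1) → Z, Function.Injective z ∧
    C = Set.range fun j : Fin (m + 1) => (z j, z (j + 1))

open Function

theorem Function.exists_iterate_mem_periodicPts {α : Type*} [Finite α] (f : α → α) (x : α) :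
    ∃ k, f^[k] x ∈ periodicPts f := by
  obtain ⟨m, n, hmn, heq⟩ : ∃ m n, m < n ∧ f^[n] x = f^[m] x := by
    obtain ⟨m, n, hne, heq⟩ := Finite.exists_ne_map_eq_of_infinite (f^[·] x)
    rcases hne.lt_or_gt with h | h
    exacts [⟨m, n, h, heq.symm⟩, ⟨n, m, h, heq⟩]
  refine ⟨m, mk_mem_periodicPts (Nat.sub_pos_of_lt hmn) ?_⟩
  rw [IsPeriodicPt, IsFixedPt, ← iterate_add_apply, Nat.sub_add_cancel hmn.le, heq]

/-- The cycle is the periodic orbit of a choice of successors. -/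
theorem exists_injective_cycle_of_forall_exists {Z : Type*} [Finite Z] [Nonempty Z]
    (r : Z → Z → Prop) (hr : ∀ v, ∃ w, r v w) :
    ∃ (m : ℕ) (z : Fin (m + 1) → Z), Injective z ∧ ∀ j, r (z j) (z (j + 1)) := by
  choose g hg using hr
  obtain ⟨k, hk⟩ := g.exists_iterate_mem_periodicPts (Classical.arbitrary Z)
  set y := g^[k] (Classical.arbitrary Z)
  obtain ⟨m, hm⟩ := Nat.exists_eq_add_one_of_ne_zero (minimalPeriod_pos_of_mem_periodicPts hk).ne'
  have hlt (j : Fin (m + 1)) : (j : ℕ) ∈ Set.Iio (minimalPeriod g y) := by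
    rw [Set.mem_Iio, hm]
    exact j.isLt
  refine ⟨m, fun j => g^[j] y, fun i j hij => Fin.ext ?_, fun j => ?_⟩
  · exact iterate_injOn_Iio_minimalPeriod (hlt i) (hlt j) hij
  · have hsucc : g^[((j + 1 : Fin (m + 1)) : ℕ)] y = g (g^[j] y) := by
      have hmod := iterate_mod_minimalPeriod_eq (f := g) (x := y) (n := j + 1)
      rw [hm] at hmod
      rw [Fin.val_add, Fin.val_one', Nat.add_mod_mod, hmod, iterate_succ_apply']
    simpa only [hsucc] using hg _

theorem Set.indicator_range_const_eq_sum_ite {ι α M : Type*} [Fintype ι] [DecidableEq α]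
    [AddCommMonoid M] {e : ι → α} (he : Injective e) (c : M) (a : α) :
    (Set.range e).indicator (fun _ => c) a = ∑ i, if e i = a then c else 0 := by
  by_cases ha : a ∈ Set.range e
  · obtain ⟨i, rfl⟩ := ha
    rw [Set.indicator_of_mem (Set.mem_range_self i),
      Finset.sum_eq_single_of_mem i (Finset.mem_univ i) fun j _ hj => if_neg (he.ne hj),
      if_pos rfl]
  · rw [Set.indicator_of_notMem ha, eq_comm]
    exact Finset.sum_eq_zero fun i _ => if_neg fun h => ha ⟨i, h⟩

theorem setOf_pos_sub_ssubset {α : Type*} {f g : α → ℝ} (hg : ∀ x, 0 ≤ g x) {a : α}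
    (ha : 0 < f a) (hfa : f a ≤ g a) : {x | 0 < f x - g x} ⊂ {x | 0 < f x} :=
  (Set.ssubset_iff_of_subset fun x (hx : 0 < f x - g x) => show 0 < f x by linarith [hg x]).mpr
    ⟨a, ha, fun (h : 0 < f a - g a) => by linarith⟩

section

variable {Z : Type*}

def IsCycleCombination (ζ : Z → Z → ℝ) : Prop :=
  ∃ (J : ℕ) (C : Fin J → Set (Z × Z)) (lam : Fin J → ℝ),
    (∀ j, IsCycle (C j)) ∧ (∀ j, 0 ≤ lam j) ∧
    ∀ z z', ζ z z' = ∑ j, Set.indicator (C j) (fun _ => lam j) (z, z')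

theorem isCycleCombination_zero : IsCycleCombination fun _ _ : Z => (0 : ℝ) :=
  ⟨0, Fin.elim0, Fin.elim0, fun j => j.elim0, fun j => j.elim0, fun _ _ => by simp⟩

theorem IsCycleCombination.add_indicator {ζ : Z → Z → ℝ} (h : IsCycleCombination ζ)
    {C : Set (Z × Z)} (hC : IsCycle C) {c : ℝ} (hc : 0 ≤ c) :
    IsCycleCombination fun v w => ζ v w + C.indicator (fun _ => c) (v, w) := by
  obtain ⟨J, Cs, lam, hCs, hlam, hζ⟩ := h
  refine ⟨J + 1, Fin.cons C Cs, Fin.cons c lam, Fin.cases hC hCs, Fin.cases hc hlam,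
    fun v w => ?_⟩
  show ζ v w + _ = _
  rw [Fin.sum_univ_succ, add_comm, hζ]
  rfl

/-- The edges of the closed walk `z 0 → z 1 → ⋯ → z m → z 0`; addition in `Fin (m + 1)` wraps
around. -/
def cycleEdges {m : ℕ} (z : Fin (m + 1) → Z) : Set (Z × Z) :=
  Set.range fun j => (z j, z (j + 1))

theorem mk_mem_cycleEdges {m : ℕ} (z : Fin (m + 1) → Z) (j : Fin (m + 1)) :
    (z j, z (j + 1)) ∈ cycleEdges z :=
  Set.mem_range_self j

theorem isCycle_cycleEdges {m : ℕ} {z : Fin (m + 1) → Z} (hz : Injective z) :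
    IsCycle (cycleEdges z) :=
  ⟨m, z, hz, rfl⟩

theorem sub_indicator_cycleEdges_nonneg {ζ : Z → Z → ℝ} (hpos : ∀ v w, 0 ≤ ζ v w) {m : ℕ}
    {z : Fin (m + 1) → Z} {c : ℝ} (hc : ∀ j, c ≤ ζ (z j) (z (j + 1))) (v w : Z) :
    0 ≤ ζ v w - (cycleEdges z).indicator (fun _ => c) (v, w) := by
  by_cases hvw : (v, w) ∈ cycleEdges z
  · rw [Set.indicator_of_mem hvw, sub_nonneg]
    obtain ⟨j, hj⟩ := hvw
    obtain ⟨rfl, rfl⟩ := Prod.mk.inj hj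
    exact hc j
  · rw [Set.indicator_of_notMem hvw, sub_zero]
    exact hpos v w

variable [Fintype Z]

def HasEqualMarginals (ζ : Z → Z → ℝ) : Prop :=
  ∀ z, ∑ z', ζ z z' = ∑ z', ζ z' z

theorem HasEqualMarginals.sub {ζ η : Z → Z → ℝ} (hζ : HasEqualMarginals ζ)
    (hη : HasEqualMarginals η) : HasEqualMarginals fun v w => ζ v w - η v w := by
  intro v
  simp only [Finset.sum_sub_distrib, hζ v, hη v]

theorem hasEqualMarginals_indicator_cycleEdges {m : ℕ} {z : Fin (m + 1) → Z}
    (hz : Injective z) (c : ℝ) :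
    HasEqualMarginals fun v w => (cycleEdges z).indicator (fun _ => c) (v, w) := by
  classical
  have hedge : Injective fun j => (z j, z (j + 1)) := fun i j h => hz (congrArg Prod.fst h)
  intro v
  simp only [cycleEdges, Set.indicator_range_const_eq_sum_ite hedge]
  rw [Finset.sum_comm]
  conv_rhs => rw [Finset.sum_comm]
  simp only [Prod.mk.injEq, ite_and, sum_ite_irrel, sum_ite_eq, mem_univ, ↓reduceIte,
    sum_const_zero]
  exact (Equiv.sum_comp (Equiv.addRight (1 : Fin (m + 1))) fun j => if z j = v then c else 0).symm

theorem HasEqualMarginals.exists_pos_of_pos {ζ : Z → Z → ℝ} (hbal : HasEqualMarginals ζ)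
    (hpos : ∀ v w, 0 ≤ ζ v w) {u v : Z} (huv : 0 < ζ u v) : ∃ w, 0 < ζ v w := by
  have hin : 0 < ∑ w, ζ w v :=
    huv.trans_le (Finset.single_le_sum (fun w _ => hpos w v) (Finset.mem_univ u))
  obtain ⟨w, -, hw⟩ := Finset.exists_lt_of_sum_lt (f := fun _ => 0) (g := ζ v) (s := univ)
    (by rw [sum_const_zero, hbal v]; exact hin)
  exact ⟨w, hw⟩

theorem HasEqualMarginals.exists_cycle_pos {ζ : Z → Z → ℝ} (hbal : HasEqualMarginals ζ)
    (hpos : ∀ v w, 0 ≤ ζ v w) {a b : Z} (hab : 0 < ζ a b) :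
    ∃ (m : ℕ) (z : Fin (m + 1) → Z), Injective z ∧ ∀ j, 0 < ζ (z j) (z (j + 1)) := by
  let S := {v // ∃ w, 0 < ζ v w}
  have : Nonempty S := ⟨⟨a, b, hab⟩⟩
  have hS (u : S) : ∃ w : S, 0 < ζ u w := by
    obtain ⟨w, hw⟩ := u.2
    exact ⟨⟨w, hbal.exists_pos_of_pos hpos hw⟩, hw⟩
  obtain ⟨m, z, hz, hzpos⟩ := exists_injective_cycle_of_forall_exists (fun u w : S => 0 < ζ u w) hS
  exact ⟨m, Subtype.val ∘ z, Subtype.val_injective.comp hz, hzpos⟩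

theorem isCycleCombination_of_nonneg {ζ : Z → Z → ℝ} (hpos : ∀ v w, 0 ≤ ζ v w)
    (hbal : HasEqualMarginals ζ) : IsCycleCombination ζ := by
  induction hn : {p : Z × Z | 0 < ζ p.1 p.2}.ncard using Nat.strong_induction_on
    generalizing ζ with
  | _ n ih =>
  by_cases hζ : ∃ a b, 0 < ζ a b
  · obtain ⟨a, b, hab⟩ := hζ
    obtain ⟨m, z, hz, hzpos⟩ := hbal.exists_cycle_pos hpos hab
    obtain ⟨j₀, -, hj₀⟩ := exists_min_image univ (fun j => ζ (z j) (z (j + 1))) univ_nonempty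
    set c := ζ (z j₀) (z (j₀ + 1))
    set ζ' := fun v w => ζ v w - (cycleEdges z).indicator (fun _ => c) (v, w)
    have hpos' : ∀ v w, 0 ≤ ζ' v w :=
      sub_indicator_cycleEdges_nonneg hpos fun j => hj₀ j (mem_univ j)
    have hbal' : HasEqualMarginals ζ' := hbal.sub (hasEqualMarginals_indicator_cycleEdges hz c)
    -- the edge `(z j₀, z (j₀ + 1))` of least mass leaves the support
    have hsupp : {p : Z × Z | 0 < ζ' p.1 p.2} ⊂ {p | 0 < ζ p.1 p.2} :=
      setOf_pos_sub_ssubset (Set.indicator_nonneg fun _ _ => (hzpos j₀).le)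
        (a := (z j₀, z (j₀ + 1))) (hzpos j₀)
        (Set.indicator_of_mem (mk_mem_cycleEdges z j₀) fun _ => c).ge
    have hlt : {p : Z × Z | 0 < ζ' p.1 p.2}.ncard < n := hn ▸ Set.ncard_lt_ncard hsupp
    convert (ih _ hlt hpos' hbal' rfl).add_indicator (isCycle_cycleEdges hz) (hzpos j₀).le using 1
    funext v w
    exact (sub_add_cancel _ _).symm
  · push Not at hζ
    obtain rfl : ζ = fun _ _ => 0 := funext₂ fun v w => le_antisymm (hζ v w) (hpos v w)
    exact isCycleCombination_zero

end

theorem cycle_decomposition {Z : Type*} [Fintype Z]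
    (ζ : Z → Z → ℝ) (hpos : ∀ z z', 0 ≤ ζ z z')
    (hbal : ∀ z, ∑ z', ζ z z' = ∑ z', ζ z' z) :
    ∃ (J : ℕ) (C : Fin J → Set (Z × Z)) (lam : Fin J → ℝ),
      (∀ j, IsCycle (C j)) ∧ (∀ j, 0 ≤ lam j) ∧
      ∀ z z', ζ z z' = ∑ j, Set.indicator (C j) (fun _ => lam j) (z, z') :=
  isCycleCombination_of_nonneg hpos hbal
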